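/- In the setting of an abelian ℤ-grading of a simple Lie algebra, for w ∈ W⁰ with upper ideal I_w = Δ(1) \ N(w), a root γ ∈ I_w is a minimal element of I_w if and only if w(γ) is a simple root; equivalently, min(I_w) = w⁻¹(Π) ∩ Δ(1). -/

import Mathlib

variable {V : Type*} [NormedAddCommGroup V] [InnerProductSpace ℝ V]

/-- Data of a reduced crystallographic root system `Δ` in a Euclidean space, together with a
choice of positive system `Δ⁺` and the corresponding simple roots `Π`. -/
structure RootSystemData (V : Type*) [NormedAddCommGroup V] [InnerProductSpace ℝ V] where
  roots : Finset V
  pos : Finset V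
  simples : Finset V
  zero_not_mem : (0 : V) ∉ roots
  neg_mem : ∀ γ ∈ roots, -γ ∈ roots
  reduced : ∀ γ ∈ roots, ∀ c : ℝ, c • γ ∈ roots → c = 1 ∨ c = -1
  crystallographic : ∀ γ ∈ roots, ∀ δ ∈ roots,
    ∃ n : ℤ, 2 * (inner ℝ γ δ : ℝ) / (inner ℝ δ δ : ℝ) = (n : ℝ)
  reflect_mem : ∀ γ ∈ roots, ∀ δ ∈ roots,
    γ - (2 * (inner ℝ γ δ : ℝ) / (inner ℝ δ δ : ℝ)) • δ ∈ roots
  pos_subset : pos ⊆ roots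
  pos_or_neg : ∀ γ ∈ roots, γ ∈ pos ∨ -γ ∈ pos
  pos_neg_disjoint : ∀ γ ∈ pos, -γ ∉ pos
  simples_subset : simples ⊆ pos
  simples_indep : LinearIndependent ℝ (fun α : {x // x ∈ simples} => (α : V))
  pos_combo : ∀ γ ∈ pos, ∃ c : V → ℕ, γ = ∑ α ∈ simples, (c α : ℝ) • α

/-- Irreducibility: the roots admit no partition into two nonempty mutually orthogonal parts. -/
def RootSystemData.Irreducible (R : RootSystemData V) : Prop :=
  ∀ A B : Set V, A ∪ B = ↑R.roots → Disjoint A B →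
    (∀ a ∈ A, ∀ b ∈ B, (inner ℝ a b : ℝ) = 0) → A = ∅ ∨ B = ∅

/-- The reflection in the hyperplane orthogonal to `δ`. -/
noncomputable def reflAt (δ : V) : Function.End V :=
  fun x => x - (2 * (inner ℝ x δ : ℝ) / (inner ℝ δ δ : ℝ)) • δ

/-- The Weyl group, generated by the reflections in the roots (each reflection is an
involution, so the closure as a monoid of endomorphisms coincides with the generated group). -/
def weylGroup (R : RootSystemData V) : Submonoid (Function.End V) :=
  Submonoid.closure {f | ∃ δ ∈ R.roots, f = reflAt δ}

/-- The inversion set `N(w) = {γ ∈ Δ⁺ : w(γ) < 0}`. -/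
def invSet (R : RootSystemData V) (w : Function.End V) : Set V :=
  {γ | γ ∈ R.pos ∧ -(w γ) ∈ R.pos}

/-- The pairing `(γ, θ∨) = 2(γ,θ)/(θ,θ)`. -/
noncomputable def copair (θ γ : V) : ℝ := 2 * (inner ℝ γ θ : ℝ) / (inner ℝ θ θ : ℝ)

/-- `μ ≤ γ` iff `γ − μ` is a nonnegative integer combination of the simple roots lying in
the subset `Z`. -/
def rootLEon (simples : Finset V) (Z : Set V) (μ γ : V) : Prop :=
  ∃ c : V → ℕ, (∀ α, α ∉ Z → c α = 0) ∧ γ = μ + ∑ α ∈ simples, (c α : ℝ) • α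

/-- The weights of `g(1)`: roots with `γ(h̃) = 1` for the defining functional `ℓ`. -/
def gradeOne (R : RootSystemData V) (ℓ : V →ₗ[ℝ] ℝ) : Set V :=
  {γ | γ ∈ R.roots ∧ ℓ γ = 1}

/-- The minimal-length coset representatives
`W⁰ = {w ∈ W : w(α) ∈ Δ⁺ for all α ∈ Δ(0)⁺}`. -/
def minLengthReps (R : RootSystemData V) (ℓ : V →ₗ[ℝ] ℝ) : Set (Function.End V) :=
  {w | w ∈ weylGroup R ∧ ∀ α, α ∈ R.pos → ℓ α = 0 → w α ∈ R.pos}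

/-- The upper ideal `I_w = Δ(1) \ N(w)` attached to `w ∈ W⁰`. -/
def idealOf (R : RootSystemData V) (ℓ : V →ₗ[ℝ] ℝ) (w : Function.End V) : Set V :=
  gradeOne R ℓ \ invSet R w

/-- The minimal elements of `S` with respect to the relation `r`. -/
def minimalsRel (r : V → V → Prop) (S : Set V) : Set V :=
  {x | x ∈ S ∧ ∀ y ∈ S, r y x → y = x}

/-- The maximal elements of `S` with respect to the relation `r`. -/
def maximalsRel (r : V → V → Prop) (S : Set V) : Set V :=
  {x | x ∈ S ∧ ∀ y ∈ S, r x y → y = x}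

/-!
Weyl group elements are linear isometries permuting the roots. If `w γ` is simple and `μ ≤ γ`
in `I_w`, then `w γ = w μ + w (γ - μ)` where `w (γ - μ) ∈ Q⁺` because `w` keeps `Δ(0)⁺` positive;
a simple root is never a positive root plus a nonzero element of `Q⁺`, so `μ = γ`. Conversely,
if the positive root `w γ` is not simple, some simple `α` has `(w γ, α) > 0`, and then `w γ - α`
is a positive root. Pulling back, `γ = w⁻¹ α + w⁻¹ (w γ - α)` with degrees in `{-1, 0, 1}`
summing to `1`: one summand lies in `I_w`, the other in `Δ(0)⁺`, so `γ` is not minimal.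
-/

open scoped InnerProductSpace

namespace RootSystemData

variable (R : RootSystemData V)

theorem ne_zero_of_mem_roots {γ : V} (h : γ ∈ R.roots) : γ ≠ 0 :=
  fun h0 => R.zero_not_mem (h0 ▸ h)

theorem inner_self_pos_of_mem_roots {γ : V} (h : γ ∈ R.roots) : 0 < ⟪γ, γ⟫_ℝ :=
  real_inner_self_pos.2 (R.ne_zero_of_mem_roots h)

def rootCone : AddSubmonoid V where
  carrier := {x | ∃ c : V → ℕ, x = ∑ α ∈ R.simples, (c α : ℝ) • α}
  zero_mem' := ⟨0, by simp⟩
  add_mem' := by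
    rintro _ _ ⟨c, rfl⟩ ⟨d, rfl⟩
    exact ⟨c + d, by simp only [Pi.add_apply, Nat.cast_add, add_smul, Finset.sum_add_distrib]⟩

theorem pos_subset_rootCone {γ : V} (h : γ ∈ R.pos) : γ ∈ R.rootCone :=
  R.pos_combo γ h

theorem coeff_eq_of_sum_smul_eq {c d : V → ℝ}
    (h : ∑ α ∈ R.simples, c α • α = ∑ α ∈ R.simples, d α • α) :
    ∀ α ∈ R.simples, c α = d α := by
  intro α hα
  have hsum : ∑ β : {x // x ∈ R.simples}, (c β - d β) • (β : V) = 0 := by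
    rw [Finset.univ_eq_attach, Finset.sum_attach R.simples (fun β => (c β - d β) • β)]
    simp only [sub_smul, Finset.sum_sub_distrib, h, sub_self]
  simpa [sub_eq_zero] using
    linearIndependent_iff'.1 R.simples_indep Finset.univ _ hsum ⟨α, hα⟩ (Finset.mem_univ _)

theorem eq_zero_of_simple_eq_add {α p q : V} (hα : α ∈ R.simples) (hp : p ∈ R.pos)
    (hq : q ∈ R.rootCone) (h : α = p + q) : q = 0 := by
  classical
  obtain ⟨d, rfl⟩ := R.pos_combo p hp
  obtain ⟨c, rfl⟩ := hq
  have hcoeff : ∀ β ∈ R.simples, d β + c β = if β = α then 1 else 0 := by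
    have hα' : α = ∑ β ∈ R.simples, (((if β = α then 1 else 0 : ℕ) : ℝ)) • β := by
      simp [Finset.sum_ite_eq', hα]
    intro β hβ
    exact_mod_cast R.coeff_eq_of_sum_smul_eq (c := fun β => ((d β + c β : ℕ) : ℝ))
      (d := fun β => ((if β = α then 1 else 0 : ℕ) : ℝ))
      (by rw [← hα', h, ← Finset.sum_add_distrib]; simp [add_smul]) β hβ
  have hcα : c α = 0 := by
    by_contra hcα
    have hd : ∀ β ∈ R.simples, d β = 0 := fun β hβ => by
      have := hcoeff β hβ
      split_ifs at this with hβα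
      · subst hβα; omega
      · omega
    exact R.ne_zero_of_mem_roots (R.pos_subset hp)
      (Finset.sum_eq_zero fun β hβ => by simp [hd β hβ])
  refine Finset.sum_eq_zero fun β hβ => ?_
  have hcβ : c β = 0 := by
    have := hcoeff β hβ
    split_ifs at this with hβα
    · exact hβα ▸ hcα
    · omega
  simp [hcβ]

/-- One of the two Cartan integers is `1`: otherwise their product `4 cos² θ` is at least `4`,
which forces `β` to be a positive multiple of `α`. -/
theorem sub_mem_roots_of_inner_pos {α β : V} (hα : α ∈ R.roots) (hβ : β ∈ R.roots)
    (hpos : 0 < ⟪β, α⟫_ℝ) (hne : β ≠ α) : β - α ∈ R.roots := by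
  obtain ⟨n, hn⟩ := R.crystallographic β hβ α hα
  obtain ⟨m, hm⟩ := R.crystallographic α hα β hβ
  have hαα := R.inner_self_pos_of_mem_roots hα
  have hββ := R.inner_self_pos_of_mem_roots hβ
  have hn0 : (0 : ℝ) < n := hn ▸ by positivity
  have hm0 : (0 : ℝ) < m := hm ▸ by rw [real_inner_comm]; positivity
  by_cases hn1 : n = 1
  · have := R.reflect_mem β hβ α hα
    rwa [hn, hn1, Int.cast_one, one_smul] at this
  by_cases hm1 : m = 1
  · have := R.neg_mem _ (R.reflect_mem α hα β hβ)
    rwa [hm, hm1, Int.cast_one, one_smul, neg_sub] at this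
  have hnm : (4 : ℝ) ≤ n * m := by
    have : 2 ≤ n := by have := Int.cast_pos.1 hn0; omega
    have : 2 ≤ m := by have := Int.cast_pos.1 hm0; omega
    exact_mod_cast (by nlinarith : 4 ≤ n * m)
  have hprod : (n : ℝ) * m * (‖α‖ * ‖β‖) ^ 2 = 4 * ⟪α, β⟫_ℝ ^ 2 := by
    rw [← hn, ← hm, real_inner_comm β α, mul_pow, ← real_inner_self_eq_norm_sq,
      ← real_inner_self_eq_norm_sq]
    field_simp
    ring
  have hcs : ⟪α, β⟫_ℝ = ‖α‖ * ‖β‖ := by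
    have hle : ⟪α, β⟫_ℝ ^ 2 ≤ (‖α‖ * ‖β‖) ^ 2 := by
      rw [mul_pow, ← real_inner_self_eq_norm_sq, ← real_inner_self_eq_norm_sq, sq]
      exact real_inner_mul_inner_self_le α β
    have hge : (‖α‖ * ‖β‖) ^ 2 ≤ ⟪α, β⟫_ℝ ^ 2 := by
      nlinarith [mul_le_mul_of_nonneg_right hnm (sq_nonneg (‖α‖ * ‖β‖))]
    rw [real_inner_comm] at hpos
    exact (pow_left_inj₀ hpos.le (by positivity) two_ne_zero).1 (le_antisymm hle hge)
  obtain ⟨-, r, hr, rfl⟩ := (real_inner_div_norm_mul_norm_eq_one_iff α β).1 (by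
    rw [hcs, div_self]
    exact mul_ne_zero (norm_ne_zero_iff.2 (R.ne_zero_of_mem_roots hα))
      (norm_ne_zero_iff.2 (R.ne_zero_of_mem_roots hβ)))
  rcases R.reduced α hα r hβ with rfl | rfl
  · exact absurd (one_smul ℝ α) hne
  · linarith

theorem exists_simple_inner_pos {β : V} (hβ : β ∈ R.pos) :
    ∃ α ∈ R.simples, 0 < ⟪β, α⟫_ℝ := by
  obtain ⟨c, hc⟩ := R.pos_combo β hβ
  by_contra! hle
  have hββ : ⟪β, β⟫_ℝ ≤ 0 := by
    nth_rewrite 1 [hc]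
    rw [sum_inner]
    exact Finset.sum_nonpos fun α hα => by
      rw [real_inner_smul_left, real_inner_comm]
      exact mul_nonpos_of_nonneg_of_nonpos (Nat.cast_nonneg _) (hle α hα)
  exact hββ.not_gt (R.inner_self_pos_of_mem_roots (R.pos_subset hβ))

theorem sub_simple_mem_pos {α β : V} (hα : α ∈ R.simples) (hβ : β ∈ R.pos)
    (hpos : 0 < ⟪β, α⟫_ℝ) (hne : β ≠ α) : β - α ∈ R.pos := by
  have hroot := R.sub_mem_roots_of_inner_pos (R.pos_subset (R.simples_subset hα))
    (R.pos_subset hβ) hpos hne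
  refine (R.pos_or_neg _ hroot).resolve_right fun hneg => ?_
  rw [neg_sub] at hneg
  exact R.ne_zero_of_mem_roots (R.pos_subset hβ)
    (R.eq_zero_of_simple_eq_add hα hneg (R.pos_subset_rootCone hβ) (sub_add_cancel α β).symm)

variable (ℓ : V →ₗ[ℝ] ℝ)

theorem grade_nonneg_of_mem_rootCone (hsimp : ∀ α ∈ R.simples, 0 ≤ ℓ α) {x : V}
    (hx : x ∈ R.rootCone) : 0 ≤ ℓ x := by
  obtain ⟨c, rfl⟩ := hx
  rw [map_sum]
  exact Finset.sum_nonneg fun α hα => by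
    rw [map_smul, smul_eq_mul]
    exact mul_nonneg (Nat.cast_nonneg _) (hsimp α hα)

theorem mem_pos_of_grade_pos (hsimp : ∀ α ∈ R.simples, 0 ≤ ℓ α) {γ : V}
    (hγ : γ ∈ R.roots) (h : 0 < ℓ γ) : γ ∈ R.pos :=
  (R.pos_or_neg γ hγ).resolve_right fun hneg => by
    have := R.grade_nonneg_of_mem_rootCone ℓ hsimp (R.pos_subset_rootCone hneg)
    rw [map_neg] at this
    linarith

/-- All simple roots have nonnegative degree, so a positive root of degree `0` only involves
simple roots of degree `0`. -/
theorem rootLEon_add_of_grade_eq_zero (hsimp : ∀ α ∈ R.simples, 0 ≤ ℓ α) {σ : V}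
    (hσ : σ ∈ R.pos) (h0 : ℓ σ = 0) (μ : V) :
    rootLEon R.simples {α | ℓ α = 0} μ (μ + σ) := by
  classical
  obtain ⟨c, rfl⟩ := R.pos_combo σ hσ
  have hterm : ∀ α ∈ R.simples, (c α : ℝ) * ℓ α = 0 := by
    refine (Finset.sum_eq_zero_iff_of_nonneg
      fun α hα => mul_nonneg (Nat.cast_nonneg _) (hsimp α hα)).1 ?_
    simpa [map_sum] using h0
  refine ⟨fun α => if ℓ α = 0 then c α else 0, fun α hα => if_neg hα, ?_⟩
  congr 1
  refine Finset.sum_congr rfl fun α hα => ?_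
  dsimp only
  split_ifs with hℓ
  · rfl
  · simp [(mul_eq_zero.1 (hterm α hα)).resolve_right hℓ]

theorem reflAt_eq_reflection (δ : V) : reflAt δ = ⇑(ℝ ∙ δ)ᗮ.reflection := by
  funext x
  rw [Submodule.reflection_orthogonal_apply, Submodule.reflection_singleton_apply, reflAt,
    real_inner_self_eq_norm_sq, real_inner_comm]
  simp only [RCLike.ofReal_real_eq_id, id]
  module

def rootAutomorphisms : Submonoid (Function.End V) where
  carrier := {f | ∃ e : V ≃ₗᵢ[ℝ] V, ⇑e = f ∧ ∀ x, e x ∈ R.roots ↔ x ∈ R.roots}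
  one_mem' := ⟨LinearIsometryEquiv.refl ℝ V, rfl, fun _ => Iff.rfl⟩
  mul_mem' := by
    rintro _ _ ⟨e₁, rfl, h₁⟩ ⟨e₂, rfl, h₂⟩
    exact ⟨e₂.trans e₁, rfl, fun x => (h₁ _).trans (h₂ x)⟩

theorem weylGroup_le_rootAutomorphisms : weylGroup R ≤ R.rootAutomorphisms := by
  refine Submonoid.closure_le.2 ?_
  rintro _ ⟨δ, hδ, rfl⟩
  refine ⟨(ℝ ∙ δ)ᗮ.reflection, (reflAt_eq_reflection δ).symm, fun x => ?_⟩
  rw [← reflAt_eq_reflection]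
  refine ⟨fun hx => ?_, fun hx => R.reflect_mem x hx δ hδ⟩
  have := R.reflect_mem _ hx δ hδ
  change reflAt δ (reflAt δ x) ∈ R.roots at this
  rwa [reflAt_eq_reflection, Submodule.reflection_reflection] at this

variable {R ℓ}

theorem mem_idealOf_of_apply_mem_pos {w : Function.End V} {γ : V} (hγ : γ ∈ gradeOne R ℓ)
    (h : w γ ∈ R.pos) : γ ∈ idealOf R ℓ w :=
  ⟨hγ, fun hinv => R.pos_neg_disjoint _ h hinv.2⟩

theorem not_mem_minimalsRel_add (hsimp : ∀ α ∈ R.simples, 0 ≤ ℓ α) {S : Set V} {μ σ : V}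
    (hμ : μ ∈ S) (hσ : σ ∈ R.pos) (h0 : ℓ σ = 0) :
    μ + σ ∉ minimalsRel (rootLEon R.simples {α | ℓ α = 0}) S := fun hmin =>
  R.ne_zero_of_mem_roots (R.pos_subset hσ)
    (by simpa using hmin.2 μ hμ (R.rootLEon_add_of_grade_eq_zero ℓ hsimp hσ h0 μ))

variable {e : V ≃ₗᵢ[ℝ] V}

theorem apply_mem_pos_of_mem_idealOf (hsimp : ∀ α ∈ R.simples, 0 ≤ ℓ α)
    (he : ∀ x, e x ∈ R.roots ↔ x ∈ R.roots) {γ : V} (hγ : γ ∈ idealOf R ℓ ⇑e) : e γ ∈ R.pos :=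
  (R.pos_or_neg _ ((he γ).2 hγ.1.1)).resolve_right fun hneg =>
    hγ.2 ⟨R.mem_pos_of_grade_pos ℓ hsimp hγ.1.1 (by rw [hγ.1.2]; exact one_pos), hneg⟩

theorem mem_pos_of_apply_mem_pos (hw0 : ∀ α, α ∈ R.pos → ℓ α = 0 → e α ∈ R.pos) {x : V}
    (hx : x ∈ R.roots) (h0 : ℓ x = 0) (h : e x ∈ R.pos) : x ∈ R.pos :=
  (R.pos_or_neg x hx).resolve_right fun hneg =>
    R.pos_neg_disjoint _ h (by simpa using hw0 _ hneg (by simp [h0]))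

theorem mem_minimalsRel_of_apply_mem_simples (hsimp : ∀ α ∈ R.simples, 0 ≤ ℓ α)
    (he : ∀ x, e x ∈ R.roots ↔ x ∈ R.roots) (hw0 : ∀ α, α ∈ R.pos → ℓ α = 0 → e α ∈ R.pos)
    {γ : V} (hγ : γ ∈ idealOf R ℓ ⇑e) (hs : e γ ∈ R.simples) :
    γ ∈ minimalsRel (rootLEon R.simples {α | ℓ α = 0}) (idealOf R ℓ ⇑e) := by
  refine ⟨hγ, fun y hy ⟨c, hc0, hcγ⟩ => ?_⟩
  have hq : ∑ α ∈ R.simples, (c α : ℝ) • e α ∈ R.rootCone := by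
    refine AddSubmonoid.sum_mem _ fun α hα => ?_
    by_cases hcα : c α = 0
    · simp [hcα]
    rw [Nat.cast_smul_eq_nsmul]
    refine AddSubmonoid.nsmul_mem _ (R.pos_subset_rootCone (hw0 α (R.simples_subset hα) ?_)) _
    by_contra hℓ
    exact hcα (hc0 α hℓ)
  have hsplit : e γ = e y + ∑ α ∈ R.simples, (c α : ℝ) • e α := by
    simp [hcγ, map_sum]
  have hq0 := R.eq_zero_of_simple_eq_add hs (apply_mem_pos_of_mem_idealOf hsimp he hy) hq hsplit
  rw [hq0, add_zero] at hsplit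
  exact (e.injective hsplit).symm

theorem apply_mem_simples_of_mem_minimalsRel (hab : ∀ γ ∈ R.roots, ℓ γ = -1 ∨ ℓ γ = 0 ∨ ℓ γ = 1)
    (hsimp : ∀ α ∈ R.simples, 0 ≤ ℓ α)
    (he : ∀ x, e x ∈ R.roots ↔ x ∈ R.roots) (hw0 : ∀ α, α ∈ R.pos → ℓ α = 0 → e α ∈ R.pos)
    {γ : V} (hmin : γ ∈ minimalsRel (rootLEon R.simples {α | ℓ α = 0}) (idealOf R ℓ ⇑e)) :
    e γ ∈ R.simples := by
  by_contra hns
  have hβ := apply_mem_pos_of_mem_idealOf hsimp he hmin.1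
  obtain ⟨α, hα, hpos⟩ := R.exists_simple_inner_pos hβ
  have hβα := R.sub_simple_mem_pos hα hβ hpos fun h => hns (h ▸ hα)
  set δ := e.symm α
  have heδ : e δ = α := e.apply_symm_apply α
  have heσ : e (γ - δ) = e γ - α := by rw [map_sub, heδ]
  have hαpos := R.simples_subset hα
  have hδ : δ ∈ R.roots := (he δ).1 (heδ ▸ R.pos_subset hαpos)
  have hσ : γ - δ ∈ R.roots := (he _).1 (heσ ▸ R.pos_subset hβα)
  have hγ1 : ℓ γ = 1 := hmin.1.1.2
  have hgrades : (ℓ δ = 0 ∧ ℓ (γ - δ) = 1) ∨ (ℓ δ = 1 ∧ ℓ (γ - δ) = 0) := by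
    have hsum : ℓ δ + ℓ (γ - δ) = 1 := by rw [map_sub, hγ1]; ring
    rcases hab δ hδ with h | h | h <;> rcases hab _ hσ with h' | h' | h' <;>
      first | exact .inl ⟨h, h'⟩ | exact .inr ⟨h, h'⟩ | (exfalso; linarith)
  rcases hgrades with ⟨hδ0, hσ1⟩ | ⟨hδ1, hσ0⟩
  · refine not_mem_minimalsRel_add hsimp
      (mem_idealOf_of_apply_mem_pos ⟨hσ, hσ1⟩ (heσ ▸ hβα))
      (mem_pos_of_apply_mem_pos hw0 hδ hδ0 (heδ ▸ hαpos)) hδ0 ?_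
    rwa [sub_add_cancel]
  · refine not_mem_minimalsRel_add hsimp (mem_idealOf_of_apply_mem_pos ⟨hδ, hδ1⟩ (heδ ▸ hαpos))
      (mem_pos_of_apply_mem_pos hw0 hσ hσ0 (heσ ▸ hβα)) hσ0 ?_
    rwa [add_sub_cancel]

end RootSystemData

/-- Abelian case: for `w ∈ W⁰`, a root `γ ∈ I_w = Δ(1) \ N(w)` is a minimal element of `I_w`
iff `w(γ)` is a simple root; equivalently `min(I_w) = w⁻¹(Π) ∩ Δ(1)`. -/
theorem abelian_min_of_ideal (R : RootSystemData V) (ℓ : V →ₗ[ℝ] ℝ)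
    (hab : ∀ γ ∈ R.roots, ℓ γ = -1 ∨ ℓ γ = 0 ∨ ℓ γ = 1)
    (hsimp : ∀ α ∈ R.simples, 0 ≤ ℓ α)
    (w : Function.End V) (hw : w ∈ minLengthReps R ℓ) :
    (∀ γ ∈ idealOf R ℓ w,
        (γ ∈ minimalsRel (rootLEon R.simples {α | ℓ α = 0}) (idealOf R ℓ w) ↔
          w γ ∈ R.simples)) ∧
    minimalsRel (rootLEon R.simples {α | ℓ α = 0}) (idealOf R ℓ w)
      = {γ : V | w γ ∈ R.simples} ∩ gradeOne R ℓ := by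
  obtain ⟨hwW, hw0⟩ := hw
  obtain ⟨e, rfl, he⟩ := R.weylGroup_le_rootAutomorphisms hwW
  have key : ∀ γ ∈ idealOf R ℓ ⇑e,
      (γ ∈ minimalsRel (rootLEon R.simples {α | ℓ α = 0}) (idealOf R ℓ ⇑e) ↔ e γ ∈ R.simples) :=
    fun γ hγ => ⟨RootSystemData.apply_mem_simples_of_mem_minimalsRel hab hsimp he hw0,
      RootSystemData.mem_minimalsRel_of_apply_mem_simples hsimp he hw0 hγ⟩
  refine ⟨key, Set.ext fun γ => ⟨fun hmin => ⟨(key γ hmin.1).1 hmin, hmin.1.1⟩, ?_⟩⟩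
  rintro ⟨hs, hγ⟩
  have hγI := RootSystemData.mem_idealOf_of_apply_mem_pos hγ (R.simples_subset hs)
  exact (key γ hγI).2 hs
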